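/- There is a constant $C$, depending only on $d_1$, $d_2$ and $\max_i\|J_i\|$, such that the following holds for every $0<\rho\le 1$: if $f\in L^1(\mathbb{R}^{d_1}\times\mathbb{R}^{d_2})$ is supported in $\{(y,v): |y|\le\rho,\ |v|\le\rho\}$ and satisfies $\iint f(y,v)\,dy\,dv = 0$, and if $H\in C^1(\mathbb{R}^{d_1}\times\mathbb{R}^{d_2})$ is such that $H$, $\nabla_x H$ and $\nabla_u H$ are integrable and $\iint |x|\,|\nabla_u H(x,u)|\,dx\,du<\infty$, then $\|f*H\|_{L^1} \;\le\; C\,\rho\,\|f\|_{L^1}\Big(\|\nabla_x H\|_{L^1} + \|\nabla_u H\|_{L^1} + \iint |x|\,|\nabla_u H(x,u)|\,dx\,du\Big)$. -/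

import Mathlib

open MeasureTheory Matrix

/-- The Euclidean norm on `Fin d → ℝ`. -/
noncomputable def eNorm' (d : ℕ) (x : Fin d → ℝ) : ℝ := Real.sqrt (∑ j, x j ^ 2)

/-- The Euclidean length `|∇_x H(p)|` of the gradient of `H` in the first group of
variables. -/
noncomputable def gradXNorm (d₁ d₂ : ℕ) (H : (Fin d₁ → ℝ) × (Fin d₂ → ℝ) → ℂ)
    (p : (Fin d₁ → ℝ) × (Fin d₂ → ℝ)) : ℝ :=
  Real.sqrt (∑ j : Fin d₁, ‖fderiv ℝ H p (Pi.single j 1, 0)‖ ^ 2)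

/-- The Euclidean length `|∇_u H(p)|` of the gradient of `H` in the second group of
variables. -/
noncomputable def gradUNorm (d₁ d₂ : ℕ) (H : (Fin d₁ → ℝ) × (Fin d₂ → ℝ) → ℂ)
    (p : (Fin d₁ → ℝ) × (Fin d₂ → ℝ)) : ℝ :=
  Real.sqrt (∑ i : Fin d₂, ‖fderiv ℝ H p (0, Pi.single i 1)‖ ^ 2)

/-- The group convolution `f * H` on the group `ℝ^{d₁} × ℝ^{d₂}` with law
`(x,u)·(x',u') = (x+x', u+u'+½⟨J⃗x,x'⟩)`. -/
noncomputable def heisConv (d₁ d₂ : ℕ) (J : Fin d₂ → Matrix (Fin d₁) (Fin d₁) ℝ)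
    (f H : (Fin d₁ → ℝ) × (Fin d₂ → ℝ) → ℂ)
    (p : (Fin d₁ → ℝ) × (Fin d₂ → ℝ)) : ℂ :=
  ∫ q : (Fin d₁ → ℝ) × (Fin d₂ → ℝ),
    f q * H (p.1 - q.1, p.2 - q.2 + (1/2 : ℝ) • fun i => (J i).mulVec p.1 ⬝ᵥ q.1)

/-!
Because `f` has mean zero, `f * H (p) = ∫ f(q) (H(p + δ_q(p)) - H(p)) dq`, where for `p = (x, u)`
and `q = (y, v)` the displacement `δ_q(p) = (-y, -v + ½⟨J⃗x, y⟩)` satisfies `|δ_q(p)₁| ≤ ρ` and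
`|δ_q(p)₂| ≤ ρ + ½ c ρ |x|`, with `c` an entrywise bound for the `J_i`. By Tonelli it suffices to
bound `‖H(· + δ_q(·)) - H‖₁` for each `q` in the support of `f`. Write `H(p + δ_q(p)) - H(p)` as the
integral of `DH(p + t δ_q(p)) δ_q(p)` over `t ∈ [0, 1]`. For fixed `t`, `p ↦ p + t δ_q(p)` is a
shear and so preserves Lebesgue measure; in the new variable `p' = (x', u') = p + t δ_q(p)` one has
`|x| ≤ |x'| + ρ`, and since `ρ ≤ 1` the integrand is at most
`ρ (1 + c) (|∇ₓH| + |∇ᵤH| + |x'| |∇ᵤH|)(p')`.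
-/

open scoped ENNReal

section EuclideanNorm

variable {d : ℕ}

lemma eNorm'_eq_norm (x : Fin d → ℝ) :
    eNorm' d x = ‖(WithLp.toLp 2 x : EuclideanSpace ℝ (Fin d))‖ := by
  simp [eNorm', EuclideanSpace.norm_eq]

lemma eNorm'_nonneg (x : Fin d → ℝ) : 0 ≤ eNorm' d x := Real.sqrt_nonneg _

lemma abs_le_eNorm' (x : Fin d → ℝ) (j : Fin d) : |x j| ≤ eNorm' d x := by
  simpa [eNorm'_eq_norm] using PiLp.norm_apply_le (WithLp.toLp 2 x : EuclideanSpace ℝ (Fin d)) j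

lemma eNorm'_add_le (x y : Fin d → ℝ) : eNorm' d (x + y) ≤ eNorm' d x + eNorm' d y := by
  simpa [eNorm'_eq_norm] using
    norm_add_le (WithLp.toLp 2 x : EuclideanSpace ℝ (Fin d)) (WithLp.toLp 2 y)

lemma eNorm'_smul (r : ℝ) (x : Fin d → ℝ) : eNorm' d (r • x) = |r| * eNorm' d x := by
  simpa [eNorm'_eq_norm] using norm_smul r (WithLp.toLp 2 x : EuclideanSpace ℝ (Fin d))

lemma eNorm'_neg (x : Fin d → ℝ) : eNorm' d (-x) = eNorm' d x := by
  simp [eNorm']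

lemma eNorm'_le_sum_abs (x : Fin d → ℝ) : eNorm' d x ≤ ∑ j, |x j| := by
  rw [eNorm', Real.sqrt_le_left (Finset.sum_nonneg fun j _ => abs_nonneg _)]
  simpa only [sq_abs] using Finset.sum_sq_le_sq_sum_of_nonneg fun j _ => abs_nonneg (x j)

lemma norm_apply_le_eNorm'_mul {F : Type*} [NormedAddCommGroup F] [NormedSpace ℝ F]
    (L : (Fin d → ℝ) →ₗ[ℝ] F) (v : Fin d → ℝ) :
    ‖L v‖ ≤ eNorm' d v * √(∑ j, ‖L (Pi.single j 1)‖ ^ 2) := by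
  calc ‖L v‖ = ‖∑ j, v j • L (Pi.single j 1)‖ := by
        simp only [← map_smul, ← map_sum, ← Pi.single_smul, smul_eq_mul, mul_one,
          Finset.univ_sum_single v]
    _ ≤ ∑ j, |v j| * ‖L (Pi.single j 1)‖ := by
        simpa only [norm_smul, Real.norm_eq_abs] using
          norm_sum_le Finset.univ fun j => v j • L (Pi.single j 1)
    _ ≤ √(∑ j, |v j| ^ 2) * √(∑ j, ‖L (Pi.single j 1)‖ ^ 2) := Real.sum_mul_le_sqrt_mul_sqrt _ _ _
    _ = _ := by simp only [sq_abs, eNorm']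

end EuclideanNorm

lemma enorm_sub_le_lintegral_enorm_fderiv {E F : Type*} [NormedAddCommGroup E] [NormedSpace ℝ E]
    [NormedAddCommGroup F] [NormedSpace ℝ F] [CompleteSpace F] {H : E → F} (hH : ContDiff ℝ 1 H)
    (a δ : E) : ‖H (a + δ) - H a‖ₑ ≤ ∫⁻ t in Set.Ioc (0 : ℝ) 1, ‖fderiv ℝ H (a + t • δ) δ‖ₑ := by
  have hline : ∀ t : ℝ, HasDerivAt (fun s : ℝ => a + s • δ) δ t := fun t => by
    simpa using ((hasDerivAt_id t).smul_const δ).const_add a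
  have hderiv : ∀ t : ℝ, HasDerivAt (fun s => H (a + s • δ)) (fderiv ℝ H (a + t • δ) δ) t :=
    fun t => ((hH.differentiable one_ne_zero _).hasFDerivAt).comp_hasDerivAt t (hline t)
  have hcont : Continuous fun t : ℝ => fderiv ℝ H (a + t • δ) δ :=
    ((hH.continuous_fderiv one_ne_zero).comp (continuous_const.add
      (continuous_id.smul continuous_const))).clm_apply continuous_const
  have hftc : H (a + δ) - H a = ∫ t in Set.Ioc (0 : ℝ) 1, fderiv ℝ H (a + t • δ) δ := by
    rw [← intervalIntegral.integral_of_le zero_le_one,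
      intervalIntegral.integral_eq_sub_of_hasDerivAt (fun t _ => hderiv t)
        (hcont.intervalIntegrable 0 1)]
    simp
  rw [hftc]
  exact enorm_integral_le_lintegral_enorm _

theorem measurePreserving_add_prodMk_add {G K : Type*} [AddGroup G] [AddGroup K]
    [MeasurableSpace G] [MeasurableSpace K] [MeasurableAdd G] [MeasurableAdd₂ K]
    (μ : Measure G) (ν : Measure K) [SFinite μ] [SFinite ν] [μ.IsAddRightInvariant]
    [ν.IsAddRightInvariant] (c : G) {L : G → K} (hL : Measurable L) :
    MeasurePreserving (fun p : G × K => (p.1 + c, p.2 + L p.1)) (μ.prod ν) (μ.prod ν) :=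
  (measurePreserving_add_right μ c).skew_product (measurable_snd.add (hL.comp measurable_fst))
    (ae_of_all _ fun x => map_add_right_eq_self ν (L x))

theorem lintegral_enorm_add_sub_le {E F : Type*} [NormedAddCommGroup E] [NormedSpace ℝ E]
    [MeasurableSpace E] [BorelSpace E] [NormedAddCommGroup F] [NormedSpace ℝ F] [CompleteSpace F]
    {μ : Measure E} [SFinite μ] {H : E → F} (hH : ContDiff ℝ 1 H) {δ : E → E}
    (hδ : Continuous δ)
    (hδμ : ∀ t ∈ Set.Ioc (0 : ℝ) 1, MeasurePreserving (fun p => p + t • δ p) μ μ)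
    {G : E → ℝ≥0∞} (hG : Measurable G)
    (hbound : ∀ p, ∀ t ∈ Set.Ioc (0 : ℝ) 1, ‖fderiv ℝ H (p + t • δ p) (δ p)‖ₑ ≤ G (p + t • δ p)) :
    ∫⁻ p, ‖H (p + δ p) - H p‖ₑ ∂μ ≤ ∫⁻ y, G y ∂μ := by
  have hsegment : Continuous fun z : E × ℝ => z.1 + z.2 • δ z.1 :=
    continuous_fst.add (continuous_snd.smul (hδ.comp continuous_fst))
  calc ∫⁻ p, ‖H (p + δ p) - H p‖ₑ ∂μ
      ≤ ∫⁻ p, (∫⁻ t in Set.Ioc (0 : ℝ) 1, G (p + t • δ p)) ∂μ := lintegral_mono fun p =>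
        (enorm_sub_le_lintegral_enorm_fderiv hH p (δ p)).trans <| setLIntegral_mono
          (hG.comp (hsegment.comp (Continuous.prodMk_right p)).measurable) (hbound p)
    _ = ∫⁻ t in Set.Ioc (0 : ℝ) 1, ∫⁻ p, G (p + t • δ p) ∂μ :=
        lintegral_lintegral_swap (f := fun p t => G (p + t • δ p))
          (hG.comp hsegment.measurable).aemeasurable
    _ = ∫⁻ t in Set.Ioc (0 : ℝ) 1, ∫⁻ y, G y ∂μ :=
        setLIntegral_congr_fun measurableSet_Ioc fun t ht => (hδμ t ht).lintegral_comp hG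
    _ = ∫⁻ y, G y ∂μ := by simp [Real.volume_Ioc]

lemma enorm_integral_mul_le_of_integral_eq_zero {β 𝕜 : Type*} [MeasurableSpace β] {ν : Measure β}
    [RCLike 𝕜] {f : β → 𝕜} (hf : Integrable f ν) (hf0 : ∫ q, f q ∂ν = 0) (K : β → 𝕜) (c : 𝕜) :
    ‖∫ q, f q * K q ∂ν‖ₑ ≤ ∫⁻ q, ‖f q‖ₑ * ‖K q - c‖ₑ ∂ν := by
  by_cases hfK : Integrable (fun q => f q * K q) ν
  · have hcancel : ∫ q, f q * K q ∂ν = ∫ q, f q * (K q - c) ∂ν := by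
      simp only [mul_sub, integral_sub hfK (hf.mul_const c), integral_mul_const, hf0, zero_mul,
        sub_zero]
    simpa only [hcancel, enorm_mul] using
      enorm_integral_le_lintegral_enorm (μ := ν) fun q => f q * (K q - c)
  · simp [integral_undef hfK]

theorem lintegral_enorm_integral_mul_le_of_integral_eq_zero {α β 𝕜 : Type*} [MeasurableSpace α]
    [MeasurableSpace β] {μ : Measure α} {ν : Measure β} [SFinite μ] [SFinite ν] [RCLike 𝕜]
    {f : β → 𝕜} (hf : Integrable f ν) (hf0 : ∫ q, f q ∂ν = 0) {K : α → β → 𝕜} {k : α → 𝕜}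
    (hK : Measurable (Function.uncurry fun p q => K p q - k p)) :
    ∫⁻ p, ‖∫ q, f q * K p q ∂ν‖ₑ ∂μ ≤ ∫⁻ q, ‖f q‖ₑ * ∫⁻ p, ‖K p q - k p‖ₑ ∂μ ∂ν :=
  calc ∫⁻ p, ‖∫ q, f q * K p q ∂ν‖ₑ ∂μ
      ≤ ∫⁻ p, ∫⁻ q, ‖f q‖ₑ * ‖K p q - k p‖ₑ ∂ν ∂μ := lintegral_mono fun p =>
        enorm_integral_mul_le_of_integral_eq_zero hf hf0 (K p) (k p)
    _ = ∫⁻ q, ∫⁻ p, ‖f q‖ₑ * ‖K p q - k p‖ₑ ∂μ ∂ν :=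
        lintegral_lintegral_swap (hf.1.enorm.comp_snd.mul hK.enorm.aemeasurable)
    _ = ∫⁻ q, ‖f q‖ₑ * ∫⁻ p, ‖K p q - k p‖ₑ ∂μ ∂ν := lintegral_congr fun _ =>
        lintegral_const_mul _ (hK.comp measurable_prodMk_right).enorm

section Gradient

variable {d₁ d₂ : ℕ} (H : (Fin d₁ → ℝ) × (Fin d₂ → ℝ) → ℂ)

lemma norm_fderiv_apply_le (y : (Fin d₁ → ℝ) × (Fin d₂ → ℝ)) (v : Fin d₁ → ℝ) (w : Fin d₂ → ℝ) :
    ‖fderiv ℝ H y (v, w)‖ ≤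
      eNorm' d₁ v * gradXNorm d₁ d₂ H y + eNorm' d₂ w * gradUNorm d₁ d₂ H y := by
  set L := fderiv ℝ H y
  have hsplit : L (v, w) = L.comp (.inl ℝ _ _) v + L.comp (.inr ℝ _ _) w := by
    simp [← map_add]
  rw [hsplit]
  exact (norm_add_le _ _).trans (add_le_add
    (norm_apply_le_eNorm'_mul (L.comp (.inl ℝ _ _)).toLinearMap v)
    (norm_apply_le_eNorm'_mul (L.comp (.inr ℝ _ _)).toLinearMap w))

noncomputable def gradWeight (y : (Fin d₁ → ℝ) × (Fin d₂ → ℝ)) : ℝ :=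
  gradXNorm d₁ d₂ H y + gradUNorm d₁ d₂ H y + eNorm' d₁ y.1 * gradUNorm d₁ d₂ H y

lemma gradWeight_nonneg (y : (Fin d₁ → ℝ) × (Fin d₂ → ℝ)) : 0 ≤ gradWeight H y := by
  unfold gradWeight gradXNorm gradUNorm eNorm'
  positivity

variable {H}

lemma continuous_gradWeight (hH : ContDiff ℝ 1 H) : Continuous (gradWeight H) := by
  have := hH.continuous_fderiv one_ne_zero
  unfold gradWeight gradXNorm gradUNorm eNorm'
  fun_prop

lemma lintegral_ofReal_mul_gradWeight {a : ℝ} (ha : 0 ≤ a)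
    (hX : Integrable (gradXNorm d₁ d₂ H)) (hU : Integrable (gradUNorm d₁ d₂ H))
    (hxU : Integrable fun p => eNorm' d₁ p.1 * gradUNorm d₁ d₂ H p) :
    ∫⁻ y, ENNReal.ofReal (a * gradWeight H y) = ENNReal.ofReal (a * ((∫ p, gradXNorm d₁ d₂ H p) +
      (∫ p, gradUNorm d₁ d₂ H p) + ∫ p, eNorm' d₁ p.1 * gradUNorm d₁ d₂ H p)) := by
  have hW : Integrable (gradWeight H) := (hX.add hU).add hxU
  have hsum : ∫ y, gradWeight H y = (∫ p, gradXNorm d₁ d₂ H p) + (∫ p, gradUNorm d₁ d₂ H p) +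
      ∫ p, eNorm' d₁ p.1 * gradUNorm d₁ d₂ H p := by
    rw [← integral_add hX hU]
    exact integral_add (hX.add hU) hxU
  rw [← hsum, ← integral_const_mul, ofReal_integral_eq_lintegral_ofReal (hW.const_mul a)
    (ae_of_all _ fun y => mul_nonneg ha (gradWeight_nonneg H y))]

end Gradient

section Heisenberg

variable {d₁ d₂ : ℕ} (J : Fin d₂ → Matrix (Fin d₁) (Fin d₁) ℝ)

-- `max_i ‖J i‖ ≤ twistBound J ≤ d₁ ^ 2 * d₂ * max_i ‖J i‖`, so a constant depending on
-- `twistBound J` depends only on `d₁`, `d₂` and `max_i ‖J i‖`.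
def twistBound : ℝ := ∑ i, ∑ j, ∑ k, |J i j k|

lemma twistBound_nonneg : 0 ≤ twistBound J := by
  unfold twistBound
  positivity

lemma abs_mulVec_dotProduct_le {d : ℕ} (M : Matrix (Fin d) (Fin d) ℝ) (x y : Fin d → ℝ) :
    |M.mulVec x ⬝ᵥ y| ≤ (∑ j, ∑ k, |M j k|) * eNorm' d x * eNorm' d y :=
  calc |M.mulVec x ⬝ᵥ y| = |∑ j, ∑ k, M j k * x k * y j| := by
        simp only [mulVec, dotProduct, Finset.sum_mul]
    _ ≤ ∑ j, ∑ k, |M j k * x k * y j| := (Finset.abs_sum_le_sum_abs _ _).trans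
        (Finset.sum_le_sum fun j _ => Finset.abs_sum_le_sum_abs _ _)
    _ ≤ ∑ j, ∑ k, |M j k| * eNorm' d x * eNorm' d y := by
        gcongr with j _ k _
        rw [abs_mul, abs_mul]
        exact mul_le_mul (mul_le_mul_of_nonneg_left (abs_le_eNorm' x k) (abs_nonneg _))
          (abs_le_eNorm' y j) (abs_nonneg _) (mul_nonneg (abs_nonneg _) (eNorm'_nonneg x))
    _ = _ := by simp only [Finset.sum_mul]

lemma eNorm'_twist_le (x y : Fin d₁ → ℝ) :
    eNorm' d₂ (fun i => (J i).mulVec x ⬝ᵥ y) ≤ twistBound J * eNorm' d₁ x * eNorm' d₁ y :=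
  calc _ ≤ ∑ i, |(J i).mulVec x ⬝ᵥ y| := eNorm'_le_sum_abs _
    _ ≤ ∑ i, (∑ j, ∑ k, |J i j k|) * eNorm' d₁ x * eNorm' d₁ y :=
        Finset.sum_le_sum fun i _ => abs_mulVec_dotProduct_le (J i) x y
    _ = _ := by simp only [twistBound, Finset.sum_mul]

noncomputable def heisDisplacement (q p : (Fin d₁ → ℝ) × (Fin d₂ → ℝ)) :
    (Fin d₁ → ℝ) × (Fin d₂ → ℝ) :=
  (-q.1, -q.2 + (1/2 : ℝ) • fun i => (J i).mulVec p.1 ⬝ᵥ q.1)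

lemma heisConv_eq_integral (f H : (Fin d₁ → ℝ) × (Fin d₂ → ℝ) → ℂ)
    (p : (Fin d₁ → ℝ) × (Fin d₂ → ℝ)) :
    heisConv d₁ d₂ J f H p = ∫ q, f q * H (p + heisDisplacement J q p) := by
  simp only [heisConv, heisDisplacement, sub_eq_add_neg, add_assoc]
  rfl

lemma continuous_heisDisplacement :
    Continuous fun z : ((Fin d₁ → ℝ) × (Fin d₂ → ℝ)) × ((Fin d₁ → ℝ) × (Fin d₂ → ℝ)) =>
      heisDisplacement J z.1 z.2 := by
  unfold heisDisplacement
  fun_prop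

lemma measurePreserving_add_smul_heisDisplacement (q : (Fin d₁ → ℝ) × (Fin d₂ → ℝ)) (t : ℝ) :
    MeasurePreserving (fun p => p + t • heisDisplacement J q p) := by
  rw [Measure.volume_eq_prod]
  exact measurePreserving_add_prodMk_add volume volume (t • -q.1)
    (L := fun x : Fin d₁ → ℝ => t • (-q.2 + (1/2 : ℝ) • fun i => (J i).mulVec x ⬝ᵥ q.1))
    (by fun_prop)

lemma eNorm'_heisDisplacement_snd_le {ρ t : ℝ} (hρ : ρ ≤ 1) (ht : |t| ≤ 1)
    {q : (Fin d₁ → ℝ) × (Fin d₂ → ℝ)} (hq₁ : eNorm' d₁ q.1 ≤ ρ) (hq₂ : eNorm' d₂ q.2 ≤ ρ)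
    (p : (Fin d₁ → ℝ) × (Fin d₂ → ℝ)) :
    eNorm' d₂ (heisDisplacement J q p).2 ≤
      ρ * (1 + twistBound J) + ρ * twistBound J * eNorm' d₁ (p + t • heisDisplacement J q p).1 := by
  set c := twistBound J
  set y₁ := (p + t • heisDisplacement J q p).1
  have hc := twistBound_nonneg J
  have hρ₀ : 0 ≤ ρ := (eNorm'_nonneg _).trans hq₁
  have hp₁ : eNorm' d₁ p.1 ≤ eNorm' d₁ y₁ + ρ := by
    have hsplit : p.1 = y₁ + t • q.1 := by simp [y₁, heisDisplacement]
    have htq : |t| * eNorm' d₁ q.1 ≤ 1 * ρ := mul_le_mul ht hq₁ (eNorm'_nonneg _) zero_le_one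
    rw [hsplit]
    linarith [eNorm'_add_le y₁ (t • q.1), eNorm'_smul t q.1]
  have htwist : eNorm' d₂ (heisDisplacement J q p).2 ≤ ρ + 1/2 * (c * eNorm' d₁ p.1 * ρ) := by
    change eNorm' d₂ (-q.2 + _) ≤ _
    have h := eNorm'_add_le (-q.2) ((1/2 : ℝ) • fun i => (J i).mulVec p.1 ⬝ᵥ q.1)
    rw [eNorm'_neg, eNorm'_smul, abs_of_pos one_half_pos] at h
    have := mul_le_mul_of_nonneg_left hq₁ (mul_nonneg hc (eNorm'_nonneg p.1))
    linarith [eNorm'_twist_le J p.1 q.1]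
  have hy₁ := eNorm'_nonneg y₁
  nlinarith [mul_le_mul_of_nonneg_left hp₁ (mul_nonneg hc hρ₀),
    mul_le_mul_of_nonneg_left hρ (mul_nonneg hc hρ₀), mul_nonneg (mul_nonneg hc hρ₀) hy₁]

lemma norm_fderiv_heisDisplacement_le {ρ t : ℝ} (hρ : ρ ≤ 1) (ht : |t| ≤ 1)
    {q : (Fin d₁ → ℝ) × (Fin d₂ → ℝ)} (hq₁ : eNorm' d₁ q.1 ≤ ρ) (hq₂ : eNorm' d₂ q.2 ≤ ρ)
    (H : (Fin d₁ → ℝ) × (Fin d₂ → ℝ) → ℂ) (p : (Fin d₁ → ℝ) × (Fin d₂ → ℝ)) :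
    ‖fderiv ℝ H (p + t • heisDisplacement J q p) (heisDisplacement J q p)‖ ≤
      ρ * (1 + twistBound J) * gradWeight H (p + t • heisDisplacement J q p) := by
  set y := p + t • heisDisplacement J q p
  have hδ₁ : eNorm' d₁ (heisDisplacement J q p).1 ≤ ρ := by
    simpa only [heisDisplacement, eNorm'_neg] using hq₁
  have hδ₂ := eNorm'_heisDisplacement_snd_le J hρ ht hq₁ hq₂ p
  have hL := norm_fderiv_apply_le H y (heisDisplacement J q p).1 (heisDisplacement J q p).2
  have hc := twistBound_nonneg J
  have hρ₀ : 0 ≤ ρ := (eNorm'_nonneg _).trans hq₁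
  have hX : 0 ≤ gradXNorm d₁ d₂ H y := Real.sqrt_nonneg _
  have hU : 0 ≤ gradUNorm d₁ d₂ H y := Real.sqrt_nonneg _
  unfold gradWeight
  nlinarith [mul_le_mul_of_nonneg_right hδ₁ hX, mul_le_mul_of_nonneg_right hδ₂ hU,
    mul_nonneg (mul_nonneg hρ₀ hc) hX, mul_nonneg (mul_nonneg hρ₀ (eNorm'_nonneg y.1)) hU]

lemma lintegral_enorm_sub_heisDisplacement_le {ρ : ℝ} (hρ : ρ ≤ 1)
    {q : (Fin d₁ → ℝ) × (Fin d₂ → ℝ)} (hq₁ : eNorm' d₁ q.1 ≤ ρ) (hq₂ : eNorm' d₂ q.2 ≤ ρ)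
    {H : (Fin d₁ → ℝ) × (Fin d₂ → ℝ) → ℂ} (hH : ContDiff ℝ 1 H) :
    ∫⁻ p, ‖H (p + heisDisplacement J q p) - H p‖ₑ ≤
      ∫⁻ y, ENNReal.ofReal (ρ * (1 + twistBound J) * gradWeight H y) :=
  lintegral_enorm_add_sub_le hH ((continuous_heisDisplacement J).comp (.prodMk_right q))
    (fun t _ => measurePreserving_add_smul_heisDisplacement J q t)
    ((continuous_gradWeight hH).const_mul _).measurable.ennreal_ofReal fun p t ht => by
      rw [← ofReal_norm]
      exact ENNReal.ofReal_le_ofReal (norm_fderiv_heisDisplacement_le J hρ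
        (abs_le.2 ⟨by linarith [ht.1], ht.2⟩) hq₁ hq₂ H p)

end Heisenberg

theorem heisenberg_atom_convolution_bound_general (d₁ d₂ : ℕ)
    (J : Fin d₂ → Matrix (Fin d₁) (Fin d₁) ℝ) :
    ∃ C : ℝ, ∀ ρ : ℝ, 0 < ρ → ρ ≤ 1 →
      ∀ f : (Fin d₁ → ℝ) × (Fin d₂ → ℝ) → ℂ, Integrable f →
        (Function.support f ⊆ {q | eNorm' d₁ q.1 ≤ ρ ∧ eNorm' d₂ q.2 ≤ ρ}) →
        (∫ q, f q) = 0 →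
      ∀ H : (Fin d₁ → ℝ) × (Fin d₂ → ℝ) → ℂ, ContDiff ℝ 1 H → Integrable H →
        Integrable (fun p => gradXNorm d₁ d₂ H p) →
        Integrable (fun p => gradUNorm d₁ d₂ H p) →
        Integrable (fun p => eNorm' d₁ p.1 * gradUNorm d₁ d₂ H p) →
        (∫⁻ p, (‖heisConv d₁ d₂ J f H p‖₊ : ENNReal))
          ≤ ENNReal.ofReal
              (C * ρ * (∫ q, ‖f q‖) *
                ((∫ p, gradXNorm d₁ d₂ H p) + (∫ p, gradUNorm d₁ d₂ H p) +
                  ∫ p, eNorm' d₁ p.1 * gradUNorm d₁ d₂ H p)) := by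
  refine ⟨1 + twistBound J, fun ρ _ hρ1 f hf hsupp hmean H hH _ hX hU hxU => ?_⟩
  set I := (∫ p, gradXNorm d₁ d₂ H p) + (∫ p, gradUNorm d₁ d₂ H p) +
    ∫ p, eNorm' d₁ p.1 * gradUNorm d₁ d₂ H p
  have hM : 0 ≤ ρ * (1 + twistBound J) := by nlinarith [twistBound_nonneg J]
  have hlocal : ∀ q, ‖f q‖ₑ * ∫⁻ p, ‖H (p + heisDisplacement J q p) - H p‖ₑ ≤
      ‖f q‖ₑ * ENNReal.ofReal (ρ * (1 + twistBound J) * I) := fun q => by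
    by_cases hfq : f q = 0
    · simp [hfq]
    obtain ⟨hq₁, hq₂⟩ := hsupp hfq
    rw [← lintegral_ofReal_mul_gradWeight hM hX hU hxU]
    gcongr ‖f q‖ₑ * ?_
    exact lintegral_enorm_sub_heisDisplacement_le J hρ1 hq₁ hq₂ hH
  have hkernel : Measurable (Function.uncurry fun p q => H (p + heisDisplacement J q p) - H p) :=
    (hH.continuous.comp (continuous_fst.add ((continuous_heisDisplacement J).comp
      continuous_swap))).sub (hH.continuous.comp continuous_fst) |>.measurable
  calc ∫⁻ p, ‖heisConv d₁ d₂ J f H p‖ₑ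
      = ∫⁻ p, ‖∫ q, f q * H (p + heisDisplacement J q p)‖ₑ := by simp only [heisConv_eq_integral]
    _ ≤ ∫⁻ q, ‖f q‖ₑ * ∫⁻ p, ‖H (p + heisDisplacement J q p) - H p‖ₑ :=
        lintegral_enorm_integral_mul_le_of_integral_eq_zero hf hmean hkernel
    _ ≤ ∫⁻ q, ‖f q‖ₑ * ENNReal.ofReal (ρ * (1 + twistBound J) * I) := lintegral_mono hlocal
    _ = ENNReal.ofReal ((1 + twistBound J) * ρ * (∫ q, ‖f q‖) * I) := by
        rw [lintegral_mul_const'' _ hf.1.enorm, ← ofReal_integral_norm_eq_lintegral_enorm hf,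
          ← ENNReal.ofReal_mul (integral_nonneg fun q => norm_nonneg _)]
        ring_nf

/-- Cancellation estimate on a group of Heisenberg type: if `f` is an
`L¹` function supported in `{|y| ≤ ρ, |v| ≤ ρ}` with mean zero, and `H ∈ C¹` has
integrable gradients, then
`‖f*H‖₁ ≤ C ρ ‖f‖₁ (‖∇_x H‖₁ + ‖∇_u H‖₁ + ∬ |x||∇_u H|)`. -/
theorem heisenberg_atom_convolution_bound (d₁ d₂ : ℕ) (hd₁ : 1 ≤ d₁) (hd₂ : 1 ≤ d₂)
    (J : Fin d₂ → Matrix (Fin d₁) (Fin d₁) ℝ) (hJ : ∀ i, (J i)ᵀ = -(J i)) :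
    ∃ C : ℝ, ∀ ρ : ℝ, 0 < ρ → ρ ≤ 1 →
      ∀ f : (Fin d₁ → ℝ) × (Fin d₂ → ℝ) → ℂ, Integrable f →
        (Function.support f ⊆ {q | eNorm' d₁ q.1 ≤ ρ ∧ eNorm' d₂ q.2 ≤ ρ}) →
        (∫ q, f q) = 0 →
      ∀ H : (Fin d₁ → ℝ) × (Fin d₂ → ℝ) → ℂ, ContDiff ℝ 1 H → Integrable H →
        Integrable (fun p => gradXNorm d₁ d₂ H p) →
        Integrable (fun p => gradUNorm d₁ d₂ H p) →
        Integrable (fun p => eNorm' d₁ p.1 * gradUNorm d₁ d₂ H p) →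
        (∫⁻ p, (‖heisConv d₁ d₂ J f H p‖₊ : ENNReal))
          ≤ ENNReal.ofReal
              (C * ρ * (∫ q, ‖f q‖) *
                ((∫ p, gradXNorm d₁ d₂ H p) + (∫ p, gradUNorm d₁ d₂ H p) +
                  ∫ p, eNorm' d₁ p.1 * gradUNorm d₁ d₂ H p)) :=
  heisenberg_atom_convolution_bound_general d₁ d₂ J
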